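/- arXiv:2209.01581 — 3 statements merged into one kernel-verified Lean document; each statement's English description precedes it below -/
import Mathlib

section
/- Let k be an algebraically closed field of characteristic zero, B a finitely generated k-algebra that is an integral domain, and f ∈ B[x] a monic polynomial. Let R be an integral domain that is a finitely generated B[x]_f-algebra containing B[x]_f, and let h ∈ R be nonzero. Then there exists a nonzero a ∈ B such that for every k-algebra homomorphism c : B → k with c(a) ≠ 0, the image h ⊗ 1 of h in R ⊗_{B[x]_f} k(x) is nonzero, where the tensor product is formed along the extension of c to B[x]_f → k(x) determined by c(x) = x. -/
/-!
The core is the extension lemma of Atiyah–Macdonald (Prop. 5.23): if a domain `R` is finitely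
generated over a subring `A` and `h ≠ 0` in `R`, there is `a ≠ 0` in `A` such that every
homomorphism `σ` from `A` to an algebraically closed field `L` with `σ a ≠ 0` extends to `R`
without killing `h`. Adjoining one generator `t` at a time reduces it to `R = A[t]`. If `t` is
transcendental, send it to a point where the specialisation of a polynomial representing `h` does
not vanish. If `t` is algebraic, send it to a root of `σ m` for a relation `m` of minimal degree;
pseudo-division by `m` shows that all relations then vanish, and `h` survives because it divides
a nonzero element of `A`.

Apply this to `B[x]_f ⊆ R` and `L` an algebraic closure of `k(x)`. Writing `a = p / fⁿ`, the
leading coefficient of `p` is the required element of `B`, and the extension `φ : R → L` together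
with `k(x) → L` maps `R ⊗ k(x)` to `L`, sending `h ⊗ 1` to `φ h ≠ 0`.
-/

open Polynomial

namespace Polynomial

variable {A : Type*} [CommRing A] [IsDomain A]

theorem exists_C_leadingCoeff_pow_mul_sub_mul_degree_lt {m : A[X]} (hm : m ≠ 0) (q : A[X]) :
    ∃ (e : ℕ) (r : A[X]), (C m.leadingCoeff ^ e * q - m * r).degree < m.degree := by
  induction hn : q.natDegree using Nat.strong_induction_on generalizing q with
  | _ n ih =>
  by_cases hq : q.degree < m.degree
  · exact ⟨0, 0, by simpa using hq⟩
  have hq0 : q ≠ 0 := by rintro rfl; exact hq (by simpa [bot_lt_iff_ne_bot] using hm)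
  have hdeg : m.natDegree ≤ q.natDegree := natDegree_le_natDegree (not_lt.1 hq)
  set u := C q.leadingCoeff * X ^ (q.natDegree - m.natDegree)
  set q' := C m.leadingCoeff * q - u * m
  have hq'lt : q'.degree < q.degree := by
    have hlc : m.leadingCoeff ≠ 0 := leadingCoeff_ne_zero.2 hm
    rw [← degree_C_mul (p := q) hlc]
    refine degree_sub_lt_left ?_ (by simp [hlc, hq0]) ?_
    · rw [degree_C_mul hlc, degree_mul, degree_C_mul_X_pow _ (leadingCoeff_ne_zero.2 hq0),
        degree_eq_natDegree hq0, degree_eq_natDegree hm]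
      norm_cast
      omega
    · simp only [u, leadingCoeff_mul, leadingCoeff_C, leadingCoeff_X_pow, mul_one]
      ring
  obtain ⟨e, r, hr⟩ :
      ∃ (e : ℕ) (r : A[X]), (C m.leadingCoeff ^ e * q' - m * r).degree < m.degree := by
    by_cases hq' : q' = 0
    · exact ⟨0, 0, by simpa [hq', bot_lt_iff_ne_bot] using hm⟩
    exact ih _ (hn ▸ natDegree_lt_natDegree hq' hq'lt) q' rfl
  refine ⟨e + 1, r + C m.leadingCoeff ^ e * u, ?_⟩
  convert hr using 2
  simp only [q']
  ring

theorem exists_mem_ideal_forall_dvd_C_leadingCoeff_pow_mul {I : Ideal A[X]} (hI : I ≠ ⊥) :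
    ∃ m ∈ I, m ≠ 0 ∧ ∀ q ∈ I, ∃ e : ℕ, m ∣ C m.leadingCoeff ^ e * q := by
  obtain ⟨m, ⟨hmI, hm0⟩, hmin⟩ := degree_lt_wf.has_min {p | p ∈ I ∧ p ≠ 0}
    (Submodule.exists_mem_ne_zero_of_ne_bot hI)
  refine ⟨m, hmI, hm0, fun q hq => ?_⟩
  obtain ⟨e, r, hr⟩ := exists_C_leadingCoeff_pow_mul_sub_mul_degree_lt hm0 q
  refine ⟨e, r, sub_eq_zero.1 (by_contra fun hne => hmin _ ⟨?_, hne⟩ hr)⟩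
  exact I.sub_mem (I.mul_mem_left _ hq) (I.mul_mem_right _ hmI)

end Polynomial

section Extension

variable {L : Type*} {A S R : Type*} [CommRing A] [CommRing S] [CommRing R]

variable (L) in
def ExtendsNonvanishing [CommRing L] [Algebra A R] (a : A) (h : R) : Prop :=
  ∀ σ : A →+* L, σ a ≠ 0 → ∃ φ : R →+* L, φ.comp (algebraMap A R) = σ ∧ φ h ≠ 0

theorem ExtendsNonvanishing.trans [CommRing L] [Algebra A S] [Algebra S R] [Algebra A R]
    [IsScalarTower A S R] {a : A} {s : S} {h : R} (has : ExtendsNonvanishing L a s)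
    (hsh : ExtendsNonvanishing L s h) : ExtendsNonvanishing L a h := by
  intro σ hσ
  obtain ⟨ψ, hψ, hψs⟩ := has σ hσ
  obtain ⟨φ, hφ, hφh⟩ := hsh ψ hψs
  exact ⟨φ, by rw [IsScalarTower.algebraMap_eq A S R, ← RingHom.comp_assoc, hφ, hψ], hφh⟩

variable [Algebra A R] {t : R}

theorem aeval_surjective_of_adjoin_singleton_eq_top (ht : Algebra.adjoin A {t} = ⊤) :
    Function.Surjective (aeval (R := A) t) := by
  rwa [← AlgHom.range_eq_top, ← Algebra.adjoin_singleton_eq_range_aeval]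

theorem exists_ringHom_comp_aeval_of_adjoin_singleton_eq_top [CommRing L]
    (ht : Algebra.adjoin A {t} = ⊤) (σ : A →+* L) (x : L)
    (hker : ∀ q : A[X], aeval t q = 0 → eval₂ σ x q = 0) :
    ∃ φ : R →+* L, φ.comp (algebraMap A R) = σ ∧ ∀ q, φ (aeval t q) = eval₂ σ x q := by
  have hsurj := aeval_surjective_of_adjoin_singleton_eq_top ht
  let φ := (aeval (R := A) t).toRingHom.liftOfSurjective hsurj
    ⟨eval₂RingHom σ x, fun q hq => hker q hq⟩
  have hφ (q : A[X]) : φ (aeval t q) = eval₂ σ x q :=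
    RingHom.liftOfSurjective_comp_apply _ hsurj _ q
  refine ⟨φ, RingHom.ext fun a => ?_, hφ⟩
  simpa using hφ (C a)

theorem exists_extendsNonvanishing_of_transcendental [CommRing L] [IsDomain L] [Infinite L]
    (ht : Algebra.adjoin A {t} = ⊤) (htr : Transcendental A t) {h : R} (hh : h ≠ 0) :
    ∃ a : A, a ≠ 0 ∧ ExtendsNonvanishing L a h := by
  obtain ⟨q, rfl⟩ := aeval_surjective_of_adjoin_singleton_eq_top ht h
  refine ⟨q.leadingCoeff, leadingCoeff_ne_zero.2 (by rintro rfl; simp at hh), fun σ hσ => ?_⟩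
  have hqσ : q.map σ ≠ 0 := by
    rwa [← leadingCoeff_ne_zero, leadingCoeff_map_of_leadingCoeff_ne_zero σ hσ]
  obtain ⟨x, hx⟩ : ∃ x, (q.map σ).eval x ≠ 0 := by
    by_contra! hall
    exact hqσ (Polynomial.funext (by simpa using hall))
  have hker (p : A[X]) (hp : aeval t p = 0) : eval₂ σ x p = 0 := by
    rw [(transcendental_iff_injective.1 htr).eq_iff' (map_zero _) |>.1 hp, eval₂_zero]
  obtain ⟨φ, hφ, hφq⟩ := exists_ringHom_comp_aeval_of_adjoin_singleton_eq_top ht σ x hker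
  exact ⟨φ, hφ, by rwa [hφq, eval₂_eq_eval_map]⟩

theorem exists_extendsNonvanishing_of_isAlgebraic [Field L] [IsAlgClosed L] [IsDomain R]
    (hinj : Function.Injective (algebraMap A R)) (ht : Algebra.adjoin A {t} = ⊤)
    (halg : IsAlgebraic A t) {h : R} (hh : h ≠ 0) :
    ∃ a : A, a ≠ 0 ∧ ExtendsNonvanishing L a h := by
  have : IsDomain A := hinj.isDomain _
  obtain ⟨m, hmI, hm0, hdvd⟩ := exists_mem_ideal_forall_dvd_C_leadingCoeff_pow_mul
    (I := RingHom.ker (aeval (R := A) t)) fun hbot => transcendental_iff_ker_eq_bot.2 hbot halg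
  have hmdeg : m.degree ≠ 0 := fun hdeg => hm0 <| by
    rw [eq_C_of_degree_eq_zero hdeg, RingHom.mem_ker, aeval_C, map_eq_zero_iff _ hinj] at hmI
    rw [eq_C_of_degree_eq_zero hdeg, hmI, map_zero]
  obtain ⟨b, hb0, hhb⟩ := ((Algebra.isAlgebraic_adjoin_singleton_iff.2 halg) h
    (ht ▸ Algebra.mem_top)).exists_nonzero_dvd (mem_nonZeroDivisors_of_ne_zero hh)
  refine ⟨m.leadingCoeff * b, mul_ne_zero (leadingCoeff_ne_zero.2 hm0) hb0, fun σ hσ => ?_⟩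
  rw [map_mul] at hσ
  obtain ⟨x, hx⟩ := IsAlgClosed.exists_root (m.map σ)
    (by rwa [degree_map_eq_of_leadingCoeff_ne_zero σ (left_ne_zero_of_mul hσ)])
  have hker (q : A[X]) (hq : aeval t q = 0) : eval₂ σ x q = 0 := by
    obtain ⟨e, hme⟩ := hdvd q hq
    have := map_dvd (eval₂RingHom σ x) hme
    simp only [coe_eval₂RingHom, eval₂_mul, eval₂_pow, eval₂_C] at this
    rw [← eval_map, hx, zero_dvd_iff] at this
    exact (mul_eq_zero.1 this).resolve_left (pow_ne_zero _ (left_ne_zero_of_mul hσ))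
  obtain ⟨φ, hφ, -⟩ := exists_ringHom_comp_aeval_of_adjoin_singleton_eq_top ht σ x hker
  refine ⟨φ, hφ, fun hφh => right_ne_zero_of_mul hσ ?_⟩
  have := map_dvd φ hhb
  rwa [hφh, zero_dvd_iff, ← RingHom.comp_apply, hφ] at this

theorem exists_extendsNonvanishing_of_adjoin_singleton_eq_top [Field L] [IsAlgClosed L]
    [IsDomain R] (hinj : Function.Injective (algebraMap A R)) (ht : Algebra.adjoin A {t} = ⊤)
    {h : R} (hh : h ≠ 0) : ∃ a : A, a ≠ 0 ∧ ExtendsNonvanishing L a h := by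
  by_cases halg : IsAlgebraic A t
  · exact exists_extendsNonvanishing_of_isAlgebraic hinj ht halg hh
  · exact exists_extendsNonvanishing_of_transcendental ht halg hh

theorem exists_extendsNonvanishing_of_adjoin_eq_top [Field L] [IsAlgClosed L] [IsDomain R]
    (hinj : Function.Injective (algebraMap A R)) (s : Finset R)
    (hs : Algebra.adjoin A (s : Set R) = ⊤) {h : R} (hh : h ≠ 0) :
    ∃ a : A, a ≠ 0 ∧ ExtendsNonvanishing L a h := by
  classical
  induction hn : s.card generalizing R with
  | zero =>
    rw [Finset.card_eq_zero.1 hn, Finset.coe_empty, Algebra.adjoin_empty,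
      ← Algebra.adjoin_singleton_zero] at hs
    exact exists_extendsNonvanishing_of_adjoin_singleton_eq_top hinj hs hh
  | succ n ih =>
    obtain ⟨t, ht⟩ : s.Nonempty := Finset.card_pos.1 (by omega)
    set R' := Algebra.adjoin A ((s.erase t : Finset R) : Set R)
    have htop : Algebra.adjoin R' {t} = ⊤ := by
      rw [← Finset.insert_erase ht, Finset.coe_insert, Set.insert_eq, Set.union_comm,
        Algebra.adjoin_union_eq_adjoin_adjoin, ← Subalgebra.restrictScalars_top (S := R') A] at hs
      exact Subalgebra.restrictScalars_injective A hs
    obtain ⟨a', ha', hR'⟩ := exists_extendsNonvanishing_of_adjoin_singleton_eq_top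
      (L := L) (A := R') Subtype.val_injective htop hh
    let s' := (s.erase t).preimage ((↑) : R' → R) Subtype.val_injective.injOn
    have hs' : Algebra.adjoin A (s' : Set R') = ⊤ := by
      rw [Finset.coe_preimage]
      exact Algebra.adjoin_adjoin_coe_preimage
    have hcard : s'.card = n := by
      rw [Finset.card_preimage, Finset.filter_true_of_mem, Finset.card_erase_of_mem ht, hn,
        Nat.add_sub_cancel]
      exact fun x hx => ⟨⟨x, Algebra.subset_adjoin hx⟩, rfl⟩
    obtain ⟨a, ha, hA⟩ := ih (fun x y hxy => hinj (congrArg Subtype.val hxy)) s' hs' ha' hcard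
    exact ⟨a, ha, hA.trans hR'⟩

theorem exists_extendsNonvanishing [Field L] [IsAlgClosed L] [IsDomain R] [Algebra.FiniteType A R]
    (hinj : Function.Injective (algebraMap A R)) {h : R} (hh : h ≠ 0) :
    ∃ a : A, a ≠ 0 ∧ ExtendsNonvanishing L a h :=
  have ⟨s, hs⟩ := Algebra.FiniteType.out (R := A) (A := R)
  exists_extendsNonvanishing_of_adjoin_eq_top hinj s hs hh

end Extension

theorem IsLocalization.exists_ne_zero_forall_specialization_ne_zero {B k S T : Type*} [CommRing B]
    [CommRing k] [CommRing S] [CommRing T] (M : Submonoid B[X]) [Algebra B[X] S]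
    [IsLocalization M S] {a : S} (ha : a ≠ 0) (g : k[X] →+* T) (hg : Function.Injective g) :
    ∃ b : B, b ≠ 0 ∧ ∀ (c : B →+* k) (σ : S →+* T),
      σ.comp (algebraMap B[X] S) = g.comp (mapRingHom c) → c b ≠ 0 → σ a ≠ 0 := by
  obtain ⟨⟨p, m⟩, hpm⟩ := IsLocalization.surj M a
  have hp : p ≠ 0 := by
    rintro rfl
    rw [map_zero] at hpm
    exact ha ((IsLocalization.map_units S m).mul_left_eq_zero.1 hpm)
  refine ⟨p.leadingCoeff, leadingCoeff_ne_zero.2 hp, fun c σ hσ hc hσa => ?_⟩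
  have hpc : p.map c ≠ 0 := by
    rwa [← leadingCoeff_ne_zero, leadingCoeff_map_of_leadingCoeff_ne_zero c hc]
  apply hpc
  apply hg
  rw [map_zero, ← coe_mapRingHom, ← RingHom.comp_apply, ← hσ, RingHom.comp_apply, ← hpm,
    map_mul, hσa, zero_mul]

theorem TensorProduct.tmul_ne_zero_of_ringHom {A R T Ω : Type*} [CommRing A] [CommRing R]
    [CommRing T] [CommRing Ω] [Algebra A R] [Algebra A T] (φ : R →+* Ω) (ψ : T →+* Ω)
    (hφψ : φ.comp (algebraMap A R) = ψ.comp (algebraMap A T)) {x : R} {y : T}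
    (hxy : φ x * ψ y ≠ 0) : x ⊗ₜ[A] y ≠ 0 := by
  let : Algebra A Ω := (ψ.comp (algebraMap A T)).toAlgebra
  let φ' : R →ₐ[A] Ω := { φ with commutes' := RingHom.congr_fun hφψ }
  let ψ' : T →ₐ[A] Ω := { ψ with commutes' := fun _ => rfl }
  intro h0
  apply hxy
  simpa [φ', ψ'] using congrArg (Algebra.TensorProduct.productMap φ' ψ') h0

theorem image_nonzero_on_zariski_open_general
    (k : Type*) [Field k]
    (B : Type*) [CommRing B] [Algebra k B]
    (f : Polynomial B)
    (R : Type*) [CommRing R] [IsDomain R] [Algebra (Localization.Away f) R]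
    (hRinj : Function.Injective (algebraMap (Localization.Away f) R))
    [Algebra.FiniteType (Localization.Away f) R]
    (h : R) (hh : h ≠ 0) :
    ∃ a : B, a ≠ 0 ∧ ∀ c : B →ₐ[k] k, c a ≠ 0 →
      ∀ σ : Localization.Away f →+* RatFunc k,
        σ.comp (algebraMap (Polynomial B) (Localization.Away f)) =
          (algebraMap (Polynomial k) (RatFunc k)).comp
            (Polynomial.mapRingHom (c : B →+* k)) →
        letI : Algebra (Localization.Away f) (RatFunc k) := σ.toAlgebra
        (h ⊗ₜ[Localization.Away f] (1 : RatFunc k) :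
          TensorProduct (Localization.Away f) R (RatFunc k)) ≠ 0 := by
  let ι := algebraMap (RatFunc k) (AlgebraicClosure (RatFunc k))
  obtain ⟨a, ha, hext⟩ := exists_extendsNonvanishing (L := AlgebraicClosure (RatFunc k)) hRinj hh
  obtain ⟨b, hb, hspec⟩ := IsLocalization.exists_ne_zero_forall_specialization_ne_zero
    (Submonoid.powers f) ha _ (IsFractionRing.injective k[X] (RatFunc k))
  refine ⟨b, hb, fun c hc σ hσ => ?_⟩
  let : Algebra (Localization.Away f) (RatFunc k) := σ.toAlgebra
  obtain ⟨φ, hφ, hφh⟩ := hext (ι.comp σ) (by simpa using hspec c σ hσ hc)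
  exact TensorProduct.tmul_ne_zero_of_ringHom φ ι hφ (by simpa using hφh)

/-- **Nonvanishing of an element in the fibres.**
Let `k` be an algebraically closed field of characteristic zero, `B` a finitely generated
`k`-algebra that is an integral domain, and `f ∈ B[x]` a monic polynomial.  Let `R` be an
integral domain that is a finitely generated `B[x]_f`-algebra containing `B[x]_f`, and let
`h ∈ R` be nonzero.  Then there exists a nonzero `a ∈ B` such that for every `k`-algebra
homomorphism `c : B → k` with `c a ≠ 0`, the image `h ⊗ 1` of `h` in `R ⊗_{B[x]_f} k(x)` is
nonzero; here the tensor product is formed along the extension `σ : B[x]_f → k(x)` of `c`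
determined by `c(x) = x` (characterized by `σ ∘ (B[x] → B[x]_f) = (k[x] → k(x)) ∘ map c`). -/
theorem image_nonzero_on_zariski_open
    (k : Type*) [Field k] [IsAlgClosed k] [CharZero k]
    (B : Type*) [CommRing B] [IsDomain B] [Algebra k B] [Algebra.FiniteType k B]
    (f : Polynomial B) (hf : f.Monic)
    (R : Type*) [CommRing R] [IsDomain R] [Algebra (Localization.Away f) R]
    (hRinj : Function.Injective (algebraMap (Localization.Away f) R))
    [Algebra.FiniteType (Localization.Away f) R]
    (h : R) (hh : h ≠ 0) :
    ∃ a : B, a ≠ 0 ∧ ∀ c : B →ₐ[k] k, c a ≠ 0 →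
      ∀ σ : Localization.Away f →+* RatFunc k,
        σ.comp (algebraMap (Polynomial B) (Localization.Away f)) =
          (algebraMap (Polynomial k) (RatFunc k)).comp
            (Polynomial.mapRingHom (c : B →+* k)) →
        letI : Algebra (Localization.Away f) (RatFunc k) := σ.toAlgebra
        (h ⊗ₜ[Localization.Away f] (1 : RatFunc k) :
          TensorProduct (Localization.Away f) R (RatFunc k)) ≠ 0 :=
  image_nonzero_on_zariski_open_general k B f R hRinj h hh
end

section
/- Let F ⊆ E be differential fields of characteristic zero with the same field of constants, i.e., E^δ = F^δ. Let f₁,…,fₛ ∈ F and let y₁,…,yₛ ∈ E^× satisfy δ(yᵢ) = fᵢ yᵢ for i = 1,…,s. If d₁,…,dₛ ∈ ℤ and a ∈ F^× satisfy d₁f₁ + ⋯ + dₛfₛ = δ(a)/a, then y₁^{d₁} ⋯ yₛ^{dₛ} ∈ F. In particular, if f₁,…,fₛ are logarithmically dependent over F (such a relation holds with not all dᵢ zero), then y₁,…,yₛ are algebraically dependent over F. -/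
/-!
Viewing `δ` as a `Differential` structure on `E`, the logarithmic derivative `x ↦ δ x / x` turns
products into sums, so the relation says that `∏ yᵢ ^ dᵢ` and `a` have the same logarithmic
derivative. Their quotient is then a constant of `E`, hence lies in `F`. Writing `d = d⁺ - d⁻`,
the equation `∏ yᵢ ^ dᵢ⁺ = c ∏ yᵢ ^ dᵢ⁻` is a nonzero polynomial relation over `F` when `d ≠ 0`.
-/

def IsDerivationFun {R : Type*} [CommRing R] (δ : R → R) : Prop :=
  (∀ a b : R, δ (a + b) = δ a + δ b) ∧ (∀ a b : R, δ (a * b) = a * δ b + δ a * b)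

open Differential MvPolynomial

def IsDerivationFun.toDerivation {R : Type*} [CommRing R] {δ : R → R} (hδ : IsDerivationFun δ) :
    Derivation ℤ R R :=
  Derivation.mk' (AddMonoidHom.mk' δ hδ.1).toIntLinearMap fun a b => by
    simp [hδ.2, smul_eq_mul, mul_comm]

namespace Differential

variable {K : Type*} [Field K] [Differential K]

lemma logDeriv_zpow (n : ℤ) (a : K) : logDeriv (a ^ n) = n * logDeriv a := by
  rcases eq_or_ne a 0 with rfl | ha
  · rcases eq_or_ne n 0 with rfl | hn <;> simp [zero_zpow, *]
  · simp only [logDeriv, Derivation.leibniz_zpow, smul_eq_mul, zsmul_eq_mul, zpow_sub_one₀ ha]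
    field_simp

lemma logDeriv_prod_zpow {ι : Type*} (s : Finset ι) (y : ι → K) (d : ι → ℤ)
    (hy : ∀ i ∈ s, y i ≠ 0) :
    logDeriv (∏ i ∈ s, y i ^ d i) = ∑ i ∈ s, d i * logDeriv (y i) := by
  rw [logDeriv_prod _ _ _ fun i hi => zpow_ne_zero _ (hy i hi)]
  simp only [logDeriv_zpow]

lemma deriv_div_eq_zero_of_logDeriv_eq {a b : K} (ha : a ≠ 0) (hb : b ≠ 0)
    (h : logDeriv a = logDeriv b) : (a / b)′ = 0 := by
  rw [← logDeriv_eq_zero, logDeriv_div _ _ ha hb, h, sub_self]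

theorem prod_zpow_mem_range_of_logDeriv_eq {F E ι : Type*} [Field F] [Field E] [Algebra F E]
    [Differential E] [ContainConstants F E] [Fintype ι] {y : ι → E} (hy : ∀ i, y i ≠ 0)
    (d : ι → ℤ) {a : F} (ha : a ≠ 0)
    (h : ∑ i, d i * logDeriv (y i) = logDeriv (algebraMap F E a)) :
    ∏ i, y i ^ d i ∈ Set.range (algebraMap F E) := by
  have ha' : algebraMap F E a ≠ 0 := by simpa using ha
  have hu : ∏ i, y i ^ d i ≠ 0 := Finset.prod_ne_zero_iff.2 fun i _ => zpow_ne_zero _ (hy i)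
  obtain ⟨c, hc⟩ := mem_range_of_deriv_eq_zero F <| deriv_div_eq_zero_of_logDeriv_eq hu ha' <| by
    rw [logDeriv_prod_zpow _ _ _ fun i _ => hy i, h]
  exact ⟨c * a, by rw [map_mul, hc, div_mul_cancel₀ _ ha']⟩

end Differential

lemma MvPolynomial.aeval_monomial_equivFunOnFinite {R A ι : Type*} [CommSemiring R]
    [CommSemiring A] [Algebra R A] [Fintype ι] (y : ι → A) (m : ι → ℕ) (r : R) :
    aeval y (monomial (Finsupp.equivFunOnFinite.symm m) r) = algebraMap R A r * ∏ i, y i ^ m i := by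
  rw [aeval_monomial, Finsupp.prod_fintype _ _ fun i => pow_zero _]
  rfl

theorem not_algebraicIndependent_of_prod_zpow_mem_range {F E ι : Type*} [CommRing F] [Field E]
    [Algebra F E] [Fintype ι] {y : ι → E} (hy : ∀ i, y i ≠ 0) {d : ι → ℤ} (hd : d ≠ 0)
    (h : ∏ i, y i ^ d i ∈ Set.range (algebraMap F E)) : ¬ AlgebraicIndependent F y := by
  intro hind
  have := (algebraMap F E).domain_nontrivial
  obtain ⟨c, hc⟩ := h
  set pos : ι →₀ ℕ := Finsupp.equivFunOnFinite.symm fun i => (d i).toNat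
  set neg : ι →₀ ℕ := Finsupp.equivFunOnFinite.symm fun i => (-d i).toNat
  have hsplit : ∏ i, y i ^ (d i).toNat = algebraMap F E c * ∏ i, y i ^ (-d i).toNat := by
    rw [hc, ← Finset.prod_mul_distrib]
    refine Finset.prod_congr rfl fun i _ => ?_
    rw [← zpow_natCast, ← zpow_natCast, ← zpow_add₀ (hy i)]
    congr 1
    omega
  have hmon : monomial pos (1 : F) = monomial neg c := hind <| by
    simp only [pos, neg, aeval_monomial_equivFunOnFinite, map_one, one_mul, hsplit]
  obtain ⟨hpos_neg, -⟩ | ⟨h10, -⟩ := (monomial_eq_monomial_iff _ _ _ _).1 hmon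
  · refine hd (funext fun i => ?_)
    have hi := DFunLike.congr_fun hpos_neg i
    simp only [pos, neg, Finsupp.coe_equivFunOnFinite_symm] at hi
    simp only [Pi.zero_apply]
    omega
  · exact one_ne_zero h10

theorem zpow_prod_mem_of_logarithmic_relation_general
    (F E : Type*) [Field F] [Field E] [Algebra F E]
    (δ : E → E) (hδ : IsDerivationFun δ)
    -- `E` and `F` have the same constants: every constant of `E` comes from `F`
    (hconst : ∀ e : E, δ e = 0 → e ∈ Set.range (algebraMap F E))
    {s : ℕ} (f : Fin s → F) (y : Fin s → E) (hy : ∀ i, y i ≠ 0)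
    (hexp : ∀ i, δ (y i) = algebraMap F E (f i) * y i) :
    (∀ (d : Fin s → ℤ) (a : F), a ≠ 0 →
        (∑ i, (d i : E) * algebraMap F E (f i)) =
          δ (algebraMap F E a) / algebraMap F E a →
        (∏ i, y i ^ d i) ∈ Set.range (algebraMap F E)) ∧
    ((∃ (d : Fin s → ℤ) (a : F), a ≠ 0 ∧ (¬ ∀ i, d i = 0) ∧
        (∑ i, (d i : E) * algebraMap F E (f i)) =
          δ (algebraMap F E a) / algebraMap F E a) →
      ¬ AlgebraicIndependent F y) := by
  let _ : Differential E := ⟨hδ.toDerivation⟩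
  have : ContainConstants F E := ⟨hconst _⟩
  have hlogDeriv : ∀ i, logDeriv (y i) = algebraMap F E (f i) := fun i =>
    (congrArg (· / y i) (hexp i)).trans (mul_div_cancel_right₀ _ (hy i))
  have hmem : ∀ (d : Fin s → ℤ) (a : F), a ≠ 0 →
      (∑ i, (d i : E) * algebraMap F E (f i)) = δ (algebraMap F E a) / algebraMap F E a →
      (∏ i, y i ^ d i) ∈ Set.range (algebraMap F E) := fun d _ ha hrel =>
    prod_zpow_mem_range_of_logDeriv_eq hy d ha (by simp only [hlogDeriv]; exact hrel)
  refine ⟨hmem, ?_⟩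
  rintro ⟨d, a, ha, hd, hrel⟩
  exact not_algebraicIndependent_of_prod_zpow_mem_range hy (fun h => hd (congrFun h))
    (hmem d a ha hrel)

/-- **Logarithmic dependence forces algebraic dependence of exponential elements.**
Let `F ⊆ E` be differential fields of characteristic zero with the same field of constants,
i.e. every constant of `E` lies in `F`.  Let `f 0, …, f (s-1) ∈ F` and let
`y 0, …, y (s-1) ∈ E` be nonzero with `δ (y i) = f i * y i`.  Then:
(1) whenever `d : Fin s → ℤ` and `a ∈ F, a ≠ 0` satisfy `∑ i, d i • f i = δ a / a`, the element
`∏ i, (y i) ^ (d i)` lies in `F`; and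
(2) in particular, if `f 0, …, f (s-1)` are logarithmically dependent over `F` (such a relation
holds with not all `d i` zero), then `y 0, …, y (s-1)` are algebraically dependent over `F`. -/
theorem zpow_prod_mem_of_logarithmic_relation
    (F E : Type*) [Field F] [Field E] [CharZero F] [CharZero E] [Algebra F E]
    (δ : E → E) (hδ : IsDerivationFun δ)
    -- the image of `F` is stable under `δ`, so that `(F, δ|F)` is a differential subfield
    (hFstable : ∀ a : F, ∃ b : F, δ (algebraMap F E a) = algebraMap F E b)
    -- `E` and `F` have the same constants: every constant of `E` comes from `F`
    (hconst : ∀ e : E, δ e = 0 → e ∈ Set.range (algebraMap F E))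
    {s : ℕ} (f : Fin s → F) (y : Fin s → E) (hy : ∀ i, y i ≠ 0)
    (hexp : ∀ i, δ (y i) = algebraMap F E (f i) * y i) :
    (∀ (d : Fin s → ℤ) (a : F), a ≠ 0 →
        (∑ i, (d i : E) * algebraMap F E (f i)) =
          δ (algebraMap F E a) / algebraMap F E a →
        (∏ i, y i ^ d i) ∈ Set.range (algebraMap F E)) ∧
    ((∃ (d : Fin s → ℤ) (a : F), a ≠ 0 ∧ (¬ ∀ i, d i = 0) ∧
        (∑ i, (d i : E) * algebraMap F E (f i)) =
          δ (algebraMap F E a) / algebraMap F E a) →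
      ¬ AlgebraicIndependent F y) :=
  zpow_prod_mem_of_logarithmic_relation_general F E δ hδ hconst f y hy hexp
end

section
/- Let k' be a field of characteristic zero with algebraic closure \bar{k'}, let n ≥ 1 and d ≥ 1. For a set S of polynomials in the n² matrix entries X_{ij} with coefficients in k', write V(S) = {g ∈ GLₙ(\bar{k'}) : p(g) = 0 for all p ∈ S}. Suppose G = V(S_G) and Z = V(S_Z) for sets S_G, S_Z of polynomials over k', where G is a subgroup of the group GLₙ(\bar{k'}), Z is nonempty, Z·G ⊆ Z, and z⁻¹z' ∈ G for all z, z' ∈ Z (so Z is a torsor under right multiplication by G). If there exist polynomials f₁,…,fₛ over k' of degree at most d with G = V({f₁,…,fₛ}), then there exist polynomials h₁,…,h_t over k' of degree at most d with Z = V({h₁,…,h_t}). -/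
/-- The closed subset of `GLₙ(Ω)` cut out by a set `S` of polynomials in the `n²` matrix
entries with coefficients in `k'`. -/
def glZeroSet {k' Ω : Type*} [CommRing k'] [CommRing Ω] [Algebra k' Ω] {n : ℕ}
    (S : Set (MvPolynomial (Fin n × Fin n) k')) :
    Set (Matrix.GeneralLinearGroup (Fin n) Ω) :=
  {g | ∀ p ∈ S,
    MvPolynomial.aeval
      (fun q : Fin n × Fin n => (g : Matrix (Fin n) (Fin n) Ω) q.1 q.2) p = 0}

theorem aux_totalDegree_map_le {R S : Type*} [CommSemiring R] [CommSemiring S] {σ : Type*}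
    (f : R →+* S) (p : MvPolynomial σ R) :
    (MvPolynomial.map f p).totalDegree ≤ p.totalDegree :=
  Finset.sup_mono (MvPolynomial.support_map_subset f p)

theorem aux_totalDegree_aeval_le {R S : Type*} [CommSemiring R] [CommSemiring S] [Algebra R S]
    {σ₁ σ₂ : Type*} (g : σ₁ → MvPolynomial σ₂ S) (hg : ∀ j, (g j).totalDegree ≤ 1)
    (p : MvPolynomial σ₁ R) :
    (MvPolynomial.aeval g p).totalDegree ≤ p.totalDegree := by
  rw [MvPolynomial.aeval_def, MvPolynomial.eval₂_eq]
  refine (MvPolynomial.totalDegree_finset_sum _ _).trans (Finset.sup_le ?_)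
  intro m hm
  refine (MvPolynomial.totalDegree_mul _ _).trans ?_
  have h1 : (algebraMap R (MvPolynomial σ₂ S) (MvPolynomial.coeff m p)).totalDegree = 0 := by
    rw [IsScalarTower.algebraMap_apply R S (MvPolynomial σ₂ S), MvPolynomial.algebraMap_eq]
    exact MvPolynomial.totalDegree_C _
  rw [h1, Nat.zero_add]
  refine (MvPolynomial.totalDegree_finset_prod _ _).trans ?_
  have h2 : ∀ j ∈ m.support, ((g j) ^ (m j)).totalDegree ≤ m j := fun j _ =>
    (MvPolynomial.totalDegree_pow _ _).trans
      (le_trans (Nat.mul_le_mul_left _ (hg j)) (Nat.mul_one _).le)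
  exact le_trans (Finset.sum_le_sum h2) (MvPolynomial.le_totalDegree hm)

theorem aux_exists_preimage_map {R S : Type*} [CommSemiring R] [CommSemiring S] {σ : Type*}
    (f : R →+* S) (p : MvPolynomial σ S)
    (h : ∀ m, MvPolynomial.coeff m p ∈ Set.range f) :
    ∃ q : MvPolynomial σ R, MvPolynomial.map f q = p ∧ q.totalDegree ≤ p.totalDegree := by
  choose c hc using h
  refine ⟨∑ m ∈ p.support, MvPolynomial.monomial m (c m), ?_, ?_⟩
  · rw [map_sum]
    simp only [MvPolynomial.map_monomial, hc]
    exact MvPolynomial.support_sum_monomial_coeff p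
  · refine (MvPolynomial.totalDegree_finset_sum _ _).trans (Finset.sup_le ?_)
    intro m hm
    exact (MvPolynomial.totalDegree_monomial_le _ _).trans (MvPolynomial.le_totalDegree hm)

theorem aux_sub_totalDegree {S : Type*} [CommSemiring S] {n : ℕ} (B : Fin n → Fin n → S)
    (q : Fin n × Fin n) :
    (∑ l, MvPolynomial.C (B q.1 l) * MvPolynomial.X (l, q.2) :
      MvPolynomial (Fin n × Fin n) S).totalDegree ≤ 1 := by
  refine (MvPolynomial.totalDegree_finset_sum _ _).trans (Finset.sup_le ?_)
  intro l _
  refine (MvPolynomial.totalDegree_mul _ _).trans ?_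
  have hX : (MvPolynomial.X (l, q.2) : MvPolynomial (Fin n × Fin n) S).totalDegree ≤ 1 := by
    rw [show (MvPolynomial.X (l, q.2) : MvPolynomial (Fin n × Fin n) S)
        = MvPolynomial.monomial (Finsupp.single (l, q.2) 1) 1 from rfl]
    exact (MvPolynomial.totalDegree_monomial_le _ _).trans (by simp)
  simpa [MvPolynomial.totalDegree_C] using hX

set_option maxHeartbeats 1000000 in
set_option synthInstance.maxHeartbeats 200000 in
/-- **A torsor under a bounded group is bounded (by the same degree).**
Let `k'` be a field of characteristic zero with algebraic closure `Ω`, and let `n ≥ 1`,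
`d ≥ 1`.  Suppose `G = V(S_G)` and `Z = V(S_Z)` for sets `S_G`, `S_Z` of polynomials in the
`n²` matrix entries over `k'`, where `G` is a subgroup of `GLₙ(Ω)`, `Z` is nonempty,
`Z·G ⊆ Z`, and `z⁻¹z' ∈ G` for all `z, z' ∈ Z` (so `Z` is a torsor under right multiplication
by `G`).  If `G` is the zero set of finitely many polynomials over `k'` of degree at most `d`,
then `Z` is also the zero set of finitely many polynomials over `k'` of degree at most `d`. -/
theorem torsor_bounded_of_group_bounded
    (k' Ω : Type*) [Field k'] [CharZero k'] [Field Ω] [Algebra k' Ω]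
    [IsAlgClosed Ω] [Algebra.IsAlgebraic k' Ω]
    (n d : ℕ) (hn : 1 ≤ n) (hd : 1 ≤ d)
    (SG SZ : Set (MvPolynomial (Fin n × Fin n) k'))
    -- `G = V(S_G)` is a subgroup of `GLₙ(Ω)`
    (hG1 : (1 : Matrix.GeneralLinearGroup (Fin n) Ω) ∈ glZeroSet (Ω := Ω) SG)
    (hGmul : ∀ g h : Matrix.GeneralLinearGroup (Fin n) Ω,
      g ∈ glZeroSet (Ω := Ω) SG → h ∈ glZeroSet (Ω := Ω) SG →
        g * h ∈ glZeroSet (Ω := Ω) SG)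
    (hGinv : ∀ g : Matrix.GeneralLinearGroup (Fin n) Ω,
      g ∈ glZeroSet (Ω := Ω) SG → g⁻¹ ∈ glZeroSet (Ω := Ω) SG)
    -- `Z = V(S_Z)` is a nonempty torsor under right multiplication by `G`
    (hZne : (glZeroSet (Ω := Ω) SZ).Nonempty)
    (hZG : ∀ z g : Matrix.GeneralLinearGroup (Fin n) Ω,
      z ∈ glZeroSet (Ω := Ω) SZ → g ∈ glZeroSet (Ω := Ω) SG →
        z * g ∈ glZeroSet (Ω := Ω) SZ)
    (htors : ∀ z z' : Matrix.GeneralLinearGroup (Fin n) Ω,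
      z ∈ glZeroSet (Ω := Ω) SZ → z' ∈ glZeroSet (Ω := Ω) SZ →
        z⁻¹ * z' ∈ glZeroSet (Ω := Ω) SG)
    -- `G` is bounded by `d`
    (hbound : ∃ (s : ℕ) (f : Fin s → MvPolynomial (Fin n × Fin n) k'),
      (∀ i, (f i).totalDegree ≤ d) ∧
        glZeroSet (Ω := Ω) SG = glZeroSet (Ω := Ω) (Set.range f)) :
    -- conclusion: `Z` is bounded by `d`
    ∃ (t : ℕ) (h : Fin t → MvPolynomial (Fin n × Fin n) k'),
      (∀ i, (h i).totalDegree ≤ d) ∧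
        glZeroSet (Ω := Ω) SZ = glZeroSet (Ω := Ω) (Set.range h) := by
  classical
  obtain ⟨z₀, hz₀⟩ := hZne
  obtain ⟨s, f, hfdeg, hGf⟩ := hbound
  haveI : IsAlgClosure k' Ω := ⟨inferInstance, inferInstance⟩
  -- entries of a matrix in `GLₙ(Ω)`
  set ent : Matrix.GeneralLinearGroup (Fin n) Ω → (Fin n × Fin n) → Ω :=
    fun g q => (g : Matrix (Fin n) (Fin n) Ω) q.1 q.2 with hent
  have hmemZ : ∀ g : Matrix.GeneralLinearGroup (Fin n) Ω, g ∈ glZeroSet (Ω := Ω) SZ ↔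
      ∀ p ∈ SZ, MvPolynomial.aeval (ent g) p = 0 := fun g => Iff.rfl
  -- the matrix of `z₀⁻¹`
  set A : Matrix (Fin n) (Fin n) Ω := ((z₀⁻¹ : Matrix.GeneralLinearGroup (Fin n) Ω) : Matrix (Fin n) (Fin n) Ω) with hA
  -- linear substitution associated to left multiplication by a matrix `B`
  set sub : Matrix (Fin n) (Fin n) Ω → (Fin n × Fin n) → MvPolynomial (Fin n × Fin n) Ω :=
    fun B q => ∑ l, MvPolynomial.C (B q.1 l) * MvPolynomial.X (l, q.2) with hsub
  -- evaluating a substituted polynomial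
  have hevalsub : ∀ (B : Matrix (Fin n) (Fin n) Ω) (p : MvPolynomial (Fin n × Fin n) k')
      (g : Matrix.GeneralLinearGroup (Fin n) Ω), MvPolynomial.aeval (ent g) (MvPolynomial.aeval (sub B) p)
        = MvPolynomial.aeval (fun q : Fin n × Fin n => ∑ l, B q.1 l * ent g (l, q.2)) p := by
    intro B p g
    have h1 := MvPolynomial.comp_aeval_apply
      (φ := (MvPolynomial.aeval (R := Ω) (ent g)).restrictScalars k') (f := sub B) p
    have h2 : ∀ q : Fin n × Fin n,
        MvPolynomial.aeval (R := Ω) (ent g) (sub B q) = ∑ l, B q.1 l * ent g (l, q.2) := by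
      intro q
      simp [hsub]
    simpa [h2] using h1
  -- entries of products
  have hentmul : ∀ (u g : Matrix.GeneralLinearGroup (Fin n) Ω), ent (u * g)
      = fun q : Fin n × Fin n => ∑ l, (u : Matrix (Fin n) (Fin n) Ω) q.1 l * ent g (l, q.2) := by
    intro u g
    funext q
    show ((u * g : Matrix.GeneralLinearGroup (Fin n) Ω) : Matrix (Fin n) (Fin n) Ω) q.1 q.2 = _
    rw [Units.val_mul, Matrix.mul_apply]
  -- characterization of `Z` via the polynomials `f i (z₀⁻¹ • X)`
  have hZchar : ∀ g : Matrix.GeneralLinearGroup (Fin n) Ω, g ∈ glZeroSet (Ω := Ω) SZ ↔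
      ∀ i, MvPolynomial.aeval (ent g) (MvPolynomial.aeval (sub A) (f i)) = 0 := by
    intro g
    constructor
    · intro hg i
      have hmem : z₀⁻¹ * g ∈ glZeroSet (Ω := Ω) (Set.range f) := hGf ▸ htors z₀ g hz₀ hg
      have h0 : MvPolynomial.aeval (ent (z₀⁻¹ * g)) (f i) = 0 := hmem (f i) ⟨i, rfl⟩
      rw [hevalsub, ← hentmul z₀⁻¹ g]
      exact h0
    · intro hg
      have hmem : z₀⁻¹ * g ∈ glZeroSet (Ω := Ω) SG := by
        rw [hGf]
        rintro p ⟨i, rfl⟩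
        have := hg i
        rwa [hevalsub, ← hentmul z₀⁻¹ g] at this
      have := hZG z₀ (z₀⁻¹ * g) hz₀ hmem
      simpa [mul_inv_cancel_left] using this
  -- the finite extension of `k'` generated by the entries of `z₀⁻¹`
  set S₀ : Set Ω := Set.range (fun q : Fin n × Fin n => A q.1 q.2) with hS₀
  haveI : Finite ↥S₀ := (Set.finite_range _).to_subtype
  set L : IntermediateField k' Ω := IntermediateField.adjoin k' S₀ with hL
  haveI : FiniteDimensional k' L := IntermediateField.finiteDimensional_adjoin
    (fun x _ => (Algebra.IsAlgebraic.isAlgebraic (R := k') x).isIntegral)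
  set A' : Fin n → Fin n → L :=
    fun a b => ⟨A a b, IntermediateField.subset_adjoin k' S₀ ⟨(a, b), rfl⟩⟩ with hA'
  -- the polynomials `f i (z₀⁻¹ • X)` over `L`
  set subL : (Fin n × Fin n) → MvPolynomial (Fin n × Fin n) L :=
    fun q => ∑ l, MvPolynomial.C (A' q.1 l) * MvPolynomial.X (l, q.2) with hsubL
  set HL : Fin s → MvPolynomial (Fin n × Fin n) L :=
    fun i => MvPolynomial.aeval (R := k') subL (f i) with hHL
  have hHLdeg : ∀ i, (HL i).totalDegree ≤ d := fun i =>
    le_trans (aux_totalDegree_aeval_le subL (fun q => aux_sub_totalDegree A' q) (f i)) (hfdeg i)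
  -- applying an embedding `τ : L →ₐ[k'] Ω` coefficientwise to `HL i`
  have hmapHL : ∀ (τ : L →ₐ[k'] Ω) (i : Fin s),
      MvPolynomial.map (τ : L →+* Ω) (HL i)
        = MvPolynomial.aeval (R := k') (sub (fun a b => τ (A' a b))) (f i) := by
    intro τ i
    have h1 := MvPolynomial.comp_aeval_apply
      (φ := MvPolynomial.mapAlgHom (σ := Fin n × Fin n) τ) (f := subL) (f i)
    have h2 : ∀ q : Fin n × Fin n,
        MvPolynomial.mapAlgHom (σ := Fin n × Fin n) τ (subL q)
          = sub (fun a b => τ (A' a b)) q := by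
      intro q
      show MvPolynomial.map (τ : L →+* Ω) (subL q) = _
      simp [hsubL, hsub]
    have h3 : MvPolynomial.mapAlgHom (σ := Fin n × Fin n) τ (HL i)
        = MvPolynomial.map (τ : L →+* Ω) (HL i) := rfl
    rw [← h3, hHL, h1]
    exact congrArg (fun v => MvPolynomial.aeval (R := k') v (f i)) (funext h2)
  have hvalA' : (fun a b => (L.val : L →ₐ[k'] Ω) (A' a b)) = fun a b => A a b := rfl
  -- each embedded polynomial vanishes on Z
  have hvanish : ∀ (τ : L →ₐ[k'] Ω) (i : Fin s) (z : Matrix.GeneralLinearGroup (Fin n) Ω), z ∈ glZeroSet (Ω := Ω) SZ →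
      MvPolynomial.aeval (ent z) (MvPolynomial.map (τ : L →+* Ω) (HL i)) = 0 := by
    intro τ i z hz
    set σ : Ω →ₐ[k'] Ω := τ.liftNormal Ω with hσ
    have hστ : ∀ x : L, σ (x : Ω) = τ x := by
      intro x
      have := AlgHom.liftNormal_commutes τ Ω x
      simpa using this
    have hbij : Function.Bijective σ := AlgHom.normal_bijective k' Ω Ω σ
    set σe : Ω ≃ₐ[k'] Ω := AlgEquiv.ofBijective σ hbij with hσe
    set w : Matrix.GeneralLinearGroup (Fin n) Ω := Units.map (((σe.symm : Ω ≃ₐ[k'] Ω) : Ω →+* Ω).mapMatrix.toMonoidHom) z with hwdef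
    have hentw : ∀ q : Fin n × Fin n, ent w q = σe.symm (ent z q) := by
      intro q
      simp [hwdef, hent, Units.coe_map, RingHom.mapMatrix_apply, Matrix.map_apply]
    have hw : w ∈ glZeroSet (Ω := Ω) SZ := by
      intro p hp
      have h1 := MvPolynomial.comp_aeval_apply
        (φ := (σe.symm : Ω ≃ₐ[k'] Ω).toAlgHom) (f := ent z) p
      have h0 : MvPolynomial.aeval (ent z) p = 0 := hz p hp
      show MvPolynomial.aeval (ent w) p = 0
      have : ent w = fun q => σe.symm.toAlgHom (ent z q) := funext fun q => hentw q
      rw [this, ← h1, h0, map_zero]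
    rw [hmapHL, hevalsub (fun a b => τ (A' a b)) (f i) z]
    have hσw : ∀ y : Ω, σ (σe.symm y) = y := fun y => σe.apply_symm_apply y
    have hpt : (fun q : Fin n × Fin n => ∑ l, (fun a b => τ (A' a b)) q.1 l * ent z (l, q.2))
        = fun q : Fin n × Fin n => σ (∑ l, A q.1 l * ent w (l, q.2)) := by
      funext q
      rw [map_sum]
      refine Finset.sum_congr rfl fun l _ => ?_
      rw [map_mul, hστ (A' q.1 l), hentw, hσw]
    rw [hpt, ← MvPolynomial.comp_aeval_apply (φ := σ)]
    rw [← hentmul z₀⁻¹ w]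
    have hmemG : z₀⁻¹ * w ∈ glZeroSet (Ω := Ω) (Set.range f) := hGf ▸ htors z₀ w hz₀ hw
    rw [hmemG (f i) ⟨i, rfl⟩, map_zero]
  -- the space of polynomials over `k'` of degree at most `d` vanishing on `Z`
  set Wsub : Submodule k' (MvPolynomial (Fin n × Fin n) k') :=
    (MvPolynomial.restrictTotalDegree (Fin n × Fin n) k' d) ⊓
      (⨅ (z : Matrix.GeneralLinearGroup (Fin n) Ω) (_ : z ∈ glZeroSet (Ω := Ω) SZ),
        LinearMap.ker ((MvPolynomial.aeval (ent z)).toLinearMap)) with hWsub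
  have hWmem : ∀ q : MvPolynomial (Fin n × Fin n) k', q ∈ Wsub ↔
      (q.totalDegree ≤ d ∧ ∀ z ∈ glZeroSet (Ω := Ω) SZ, MvPolynomial.aeval (ent z) q = 0) := by
    intro q
    rw [hWsub, Submodule.mem_inf, MvPolynomial.mem_restrictTotalDegree]
    constructor
    · rintro ⟨h1, h2⟩
      refine ⟨h1, fun z hz => ?_⟩
      have h3 := (Submodule.mem_iInf _).mp h2 z
      have h4 := (Submodule.mem_iInf _).mp h3 hz
      exact LinearMap.mem_ker.mp h4
    · rintro ⟨h1, h2⟩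
      exact ⟨h1, (Submodule.mem_iInf _).mpr fun z => (Submodule.mem_iInf _).mpr fun hz =>
        LinearMap.mem_ker.mpr (h2 z hz)⟩
  -- evaluation of `k'`-polynomials agrees with evaluation of their base change to `Ω`
  have hmapeval : ∀ (q : MvPolynomial (Fin n × Fin n) k') (e : Fin n × Fin n → Ω),
      MvPolynomial.aeval (R := Ω) e (MvPolynomial.map (algebraMap k' Ω) q)
        = MvPolynomial.aeval (R := k') e q := by
    intro q e
    rw [MvPolynomial.aeval_def, MvPolynomial.aeval_def, MvPolynomial.eval₂_map,
      ← IsScalarTower.algebraMap_eq]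
  -- Galois-descent core: a point killing `Wsub` also kills each `f i (z₀⁻¹ • X)`
  have hcore : ∀ (i : Fin s) (x : Matrix.GeneralLinearGroup (Fin n) Ω),
      (∀ qq ∈ Wsub, MvPolynomial.aeval (ent x) qq = 0) →
        MvPolynomial.aeval (ent x) (MvPolynomial.aeval (sub A) (f i)) = 0 := by
    intro i x hx
    have hsum : ∀ lam : L, ∑ τ : L →ₐ[k'] Ω,
        MvPolynomial.aeval (R := Ω) (ent x) (MvPolynomial.map (τ : L →+* Ω) (HL i)) • τ lam
          = 0 := by
      intro lam
      set qΩ : MvPolynomial (Fin n × Fin n) Ω :=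
        ∑ τ : L →ₐ[k'] Ω, τ lam • MvPolynomial.map (τ : L →+* Ω) (HL i) with hqΩ
      have hcoeff : ∀ m, MvPolynomial.coeff m qΩ ∈ Set.range (algebraMap k' Ω) := by
        intro m
        refine ⟨Algebra.trace k' L (lam * MvPolynomial.coeff m (HL i)), ?_⟩
        rw [trace_eq_sum_embeddings (E := Ω), hqΩ, MvPolynomial.coeff_sum]
        refine Finset.sum_congr rfl fun τ _ => ?_
        rw [map_mul, MvPolynomial.coeff_smul, MvPolynomial.coeff_map, smul_eq_mul]
        rfl
      have hdegΩ : qΩ.totalDegree ≤ d := by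
        rw [hqΩ]
        refine (MvPolynomial.totalDegree_finset_sum _ _).trans (Finset.sup_le fun τ _ => ?_)
        exact le_trans (MvPolynomial.totalDegree_smul_le _ _)
          (le_trans (aux_totalDegree_map_le _ _) (hHLdeg i))
      obtain ⟨qk, hqk, hqkdeg⟩ := aux_exists_preimage_map (algebraMap k' Ω) qΩ hcoeff
      have hqkW : qk ∈ Wsub := by
        rw [hWmem]
        refine ⟨hqkdeg.trans hdegΩ, fun z hz => ?_⟩
        rw [← hmapeval qk (ent z), hqk, hqΩ, map_sum]
        refine Finset.sum_eq_zero fun τ _ => ?_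
        rw [map_smul, hvanish τ i z hz, smul_zero]
      have h0 : MvPolynomial.aeval (R := k') (ent x) qk = 0 := hx qk hqkW
      have h1 : MvPolynomial.aeval (R := Ω) (ent x) qΩ = 0 := by
        rw [← hqk, hmapeval qk (ent x)]
        exact h0
      rw [hqΩ, map_sum] at h1
      rw [← h1]
      refine Finset.sum_congr rfl fun τ _ => ?_
      rw [map_smul, smul_eq_mul, smul_eq_mul, mul_comm]
    have hinj : Function.Injective (fun τ : ↥L →ₐ[k'] Ω => (τ : ↥L →* Ω)) := by
      intro τ₁ τ₂ h
      ext a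
      exact DFunLike.congr_fun h a
    have hli : LinearIndependent Ω
        (fun τ : ↥L →ₐ[k'] Ω => ((τ : ↥L →* Ω) : ↥L → Ω)) :=
      (linearIndependent_monoidHom (↥L) Ω).comp _ hinj
    have hfun : (∑ τ : ↥L →ₐ[k'] Ω,
        (MvPolynomial.aeval (R := Ω) (ent x) (MvPolynomial.map (τ : ↥L →+* Ω) (HL i))) •
          ((τ : ↥L →* Ω) : ↥L → Ω)) = 0 := by
      funext lam
      have h2 := hsum lam
      simpa [Finset.sum_apply, Pi.smul_apply] using h2
    have hzero := Fintype.linearIndependent_iff.mp hli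
      (fun τ => MvPolynomial.aeval (R := Ω) (ent x) (MvPolynomial.map (τ : ↥L →+* Ω) (HL i)))
      hfun (L.val : ↥L →ₐ[k'] Ω)
    have hre : MvPolynomial.map (((L.val : ↥L →ₐ[k'] Ω)) : ↥L →+* Ω) (HL i)
        = MvPolynomial.aeval (R := k') (sub A) (f i) := by
      rw [hmapHL (L.val : ↥L →ₐ[k'] Ω) i]
      rfl
    rw [← hre]
    exact hzero
  -- extract a finite generating family of `Wsub`
  haveI : IsNoetherian k' (MvPolynomial.restrictTotalDegree (Fin n × Fin n) k' d) :=
    IsNoetherian.iff_fg.mpr inferInstance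
  have hle : Wsub ≤ MvPolynomial.restrictTotalDegree (Fin n × Fin n) k' d := by
    rw [hWsub]; exact inf_le_left
  have hfg : Wsub.FG := by
    have h2 : (Wsub.comap
        (MvPolynomial.restrictTotalDegree (Fin n × Fin n) k' d).subtype).FG :=
      IsNoetherian.noetherian _
    have h3 := h2.map (MvPolynomial.restrictTotalDegree (Fin n × Fin n) k' d).subtype
    rwa [Submodule.map_comap_subtype, inf_of_le_right hle] at h3
  obtain ⟨T, hT⟩ := hfg
  refine ⟨T.card, fun i => ((T.equivFin.symm i : T) : MvPolynomial (Fin n × Fin n) k'), ?_, ?_⟩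
  · intro i
    have hmem : ((T.equivFin.symm i : T) : MvPolynomial (Fin n × Fin n) k') ∈ Wsub := by
      rw [← hT]
      exact Submodule.subset_span (T.equivFin.symm i).2
    exact ((hWmem _).mp hmem).1
  · ext g
    constructor
    · intro hg p hp
      obtain ⟨j, hj⟩ := hp
      have hmem : p ∈ Wsub := by
        rw [← hT]
        refine Submodule.subset_span ?_
        rw [← hj]
        exact (T.equivFin.symm j).2
      exact ((hWmem _).mp hmem).2 g hg
    · intro hg
      have hx : ∀ qq ∈ Wsub, MvPolynomial.aeval (ent g) qq = 0 := by
        intro qq hqq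
        rw [← hT] at hqq
        refine Submodule.span_induction
          (p := fun y _ => MvPolynomial.aeval (ent g) y = 0) ?_ ?_ ?_ ?_ hqq
        · intro p hp
          exact hg p ⟨T.equivFin ⟨p, hp⟩, by simp⟩
        · simp
        · intro a b _ _ ha hb
          rw [map_add, ha, hb, add_zero]
        · intro c a _ ha
          rw [map_smul, ha, smul_zero]
      exact (hZchar g).mpr fun i => hcore i g hx
end
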